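/- For any y ∈ ℝ^p, any z ∈ ℝ^p with z_j > 0, any α ∈ (0,2), and β = α/(2−α), one has ‖y‖_α ≤ (1/2)∑_{j=1}^p y_j²/z_j + (1/2)‖z‖_β. -/

import Mathlib

/-!
Writing `|y_j|^α = (y_j²/z_j)^{α/2} z_j^{α/2}`, Hölder's inequality with the conjugate exponents
`2/α` and `2/(2-α)` gives `‖y‖_α ≤ (∑ y_j²/z_j)^{1/2} ‖z‖_β^{1/2}`, since `z_j^{α/2}` raised to
`2/(2-α)` is `z_j^β`. The weighted AM–GM inequality `√(ab) ≤ (a + b)/2` then concludes.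
-/

open scoped BigOperators

/-- The ℓ_α quasi-norm of a vector `y ∈ ℝ^p`. -/
noncomputable def lpQuasiNorm {p : ℕ} (α : ℝ) (y : Fin p → ℝ) : ℝ :=
  (∑ j, |y j| ^ α) ^ (1 / α)

open Finset Real

theorem sum_abs_rpow_le_sum_sq_div_mul_sum_rpow {ι : Type*} (s : Finset ι) {α : ℝ}
    (hα : α ∈ Set.Ioo (0 : ℝ) 2) (y z : ι → ℝ) (hz : ∀ i ∈ s, 0 < z i) :
    ∑ i ∈ s, |y i| ^ α ≤
      (∑ i ∈ s, y i ^ 2 / z i) ^ (α / 2) * (∑ i ∈ s, z i ^ (α / (2 - α))) ^ ((2 - α) / 2) := by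
  obtain ⟨hα0, hα2⟩ := hα
  have hconj : (1 / (α / 2)).HolderConjugate (1 / ((2 - α) / 2)) :=
    holderConjugate_one_div (by positivity) (by linarith) (by ring)
  have hq : ∀ i ∈ s, 0 ≤ y i ^ 2 / z i := fun i hi => div_nonneg (sq_nonneg _) (hz i hi).le
  have hsplit : ∀ i ∈ s, |y i| ^ α = (y i ^ 2 / z i) ^ (α / 2) * z i ^ (α / 2) := by
    intro i hi
    rw [← mul_rpow (hq i hi) (hz i hi).le, div_mul_cancel₀ _ (hz i hi).ne', ← sq_abs,
      ← rpow_natCast_mul (abs_nonneg _)]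
    ring_nf
  have hf : ∀ i ∈ s, ((y i ^ 2 / z i) ^ (α / 2)) ^ (1 / (α / 2)) = y i ^ 2 / z i := by
    intro i hi
    rw [← rpow_mul (hq i hi), mul_one_div_cancel (by positivity), rpow_one]
  have hg : ∀ i ∈ s, (z i ^ (α / 2)) ^ (1 / ((2 - α) / 2)) = z i ^ (α / (2 - α)) := by
    intro i hi
    rw [← rpow_mul (hz i hi).le]
    field_simp
  calc ∑ i ∈ s, |y i| ^ α = ∑ i ∈ s, (y i ^ 2 / z i) ^ (α / 2) * z i ^ (α / 2) :=
        sum_congr rfl hsplit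
    _ ≤ _ := inner_le_Lp_mul_Lq_of_nonneg s hconj (fun i hi => rpow_nonneg (hq i hi) _)
        (fun i hi => rpow_nonneg (hz i hi).le _)
    _ = _ := by rw [sum_congr rfl hf, sum_congr rfl hg, one_div_one_div, one_div_one_div]

theorem lpQuasiNorm_nonneg {p : ℕ} (α : ℝ) (y : Fin p → ℝ) : 0 ≤ lpQuasiNorm α y :=
  rpow_nonneg (sum_nonneg fun j _ => by positivity) _

theorem lpQuasiNorm_le_sqrt_mul_sqrt {p : ℕ} {α : ℝ} (hα : α ∈ Set.Ioo (0 : ℝ) 2)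
    (y z : Fin p → ℝ) (hz : ∀ j, 0 < z j) :
    lpQuasiNorm α y ≤ √(∑ j, y j ^ 2 / z j) * √(lpQuasiNorm (α / (2 - α)) z) := by
  obtain ⟨hα0, hα2⟩ := hα
  set A := ∑ j, y j ^ 2 / z j
  set S := ∑ j, z j ^ (α / (2 - α))
  have hA : 0 ≤ A := sum_nonneg fun j _ => div_nonneg (sq_nonneg _) (hz j).le
  have hS : 0 ≤ S := sum_nonneg fun j _ => rpow_nonneg (hz j).le _
  have hnorm_z : lpQuasiNorm (α / (2 - α)) z = S ^ ((2 - α) / α) := by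
    rw [lpQuasiNorm, one_div_div]
    exact congrArg (· ^ _) (sum_congr rfl fun j _ => by rw [abs_of_pos (hz j)])
  calc lpQuasiNorm α y = (∑ j, |y j| ^ α) ^ (1 / α) := rfl
    _ ≤ (A ^ (α / 2) * S ^ ((2 - α) / 2)) ^ (1 / α) :=
        rpow_le_rpow (sum_nonneg fun j _ => by positivity)
          (sum_abs_rpow_le_sum_sq_div_mul_sum_rpow univ ⟨hα0, hα2⟩ y z fun j _ => hz j)
          (by positivity)
    _ = √A * √(S ^ ((2 - α) / α)) := by
        rw [sqrt_eq_rpow, sqrt_eq_rpow, mul_rpow (by positivity) (by positivity), ← rpow_mul hA,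
          ← rpow_mul hS, ← rpow_mul hS]
        congr 2 <;> field_simp
    _ = _ := by rw [hnorm_z]

/-- The inequality direction of the variational lemma: for any `y`, any `z` with
positive entries, `α ∈ (0,2)` and `β = α/(2-α)`,
`‖y‖_α ≤ (1/2)∑ y_j²/z_j + (1/2)‖z‖_β`. -/
theorem lpQuasiNorm_le_varObj {p : ℕ} (α β : ℝ)
    (hα : α ∈ Set.Ioo (0 : ℝ) 2) (hβ : β = α / (2 - α))
    (y z : Fin p → ℝ) (hz : ∀ j, 0 < z j) :
    lpQuasiNorm α y ≤ (1 / 2) * ∑ j, y j ^ 2 / z j + (1 / 2) * lpQuasiNorm β z := by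
  subst hβ
  calc lpQuasiNorm α y
      ≤ √(∑ j, y j ^ 2 / z j) * √(lpQuasiNorm (α / (2 - α)) z) :=
        lpQuasiNorm_le_sqrt_mul_sqrt hα y z hz
    _ ≤ _ := by
        rw [sqrt_eq_rpow, sqrt_eq_rpow]
        exact geom_mean_le_arith_mean2_weighted (by norm_num) (by norm_num)
          (sum_nonneg fun j _ => div_nonneg (sq_nonneg _) (hz j).le) (lpQuasiNorm_nonneg _ z)
          (by norm_num)
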